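/- Let n be a positive integer, Q a symmetric n×n real matrix, μ ∈ ℝⁿ, ρ ∈ ℝ, u ∈ ℝⁿ, and ℵ a natural number. Suppose X̄* = [[1, (x*)ᵀ, (y*)ᵀ], [x*, X*, (Z*)ᵀ], [y*, Z*, Y*]] is an optimal solution of the SDP relaxation (it is feasible and its objective ⟨Q, X*⟩ is less than or equal to the objective ⟨Q, X⟩ of every feasible point of the SDP relaxation), and that X̄* has rank one. Then (x*, y*) is feasible for the MIQP and x* is an optimal solution of the MIQP: for every (x, y) feasible for the MIQP, (x*)ᵀQx* ≤ xᵀQx. -/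

import Mathlib

/-! A positive semidefinite arrow matrix of rank one with unit corner is `w wᵀ` for
`w = (1, x, y)`, so `X = x xᵀ`, `Y = y yᵀ`, `Z = y xᵀ`; the constraints `diag Z = 0` and
`diag Y = y` then read `xᵢ yᵢ = 0` and `yᵢ² = yᵢ`, which is MIQP feasibility. Conversely every
MIQP-feasible `(x, y)` lifts to the SDP-feasible point `w wᵀ` with objective `xᵀ Q x`, so the
optimality of the rank-one point among all SDP-feasible points gives optimality in the MIQP. -/

open Matrix

/-- The `(2n+1) × (2n+1)` arrow matrix `[[1, xᵀ, yᵀ], [x, X, Zᵀ], [y, Z, Y]]`,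
indexed by `Unit ⊕ (Fin n ⊕ Fin n)`; `Z` is the block in the `y`-row, `x`-column. -/
def arrowMat (n : ℕ) (x y : Fin n → ℝ) (X Y Z : Matrix (Fin n) (Fin n) ℝ) :
    Matrix (Unit ⊕ (Fin n ⊕ Fin n)) (Unit ⊕ (Fin n ⊕ Fin n)) ℝ :=
  fun i j =>
    match i, j with
    | Sum.inl _, Sum.inl _ => 1
    | Sum.inl _, Sum.inr (Sum.inl k) => x k
    | Sum.inl _, Sum.inr (Sum.inr k) => y k
    | Sum.inr (Sum.inl k), Sum.inl _ => x k
    | Sum.inr (Sum.inl k), Sum.inr (Sum.inl l) => X k l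
    | Sum.inr (Sum.inl k), Sum.inr (Sum.inr l) => Z l k
    | Sum.inr (Sum.inr k), Sum.inl _ => y k
    | Sum.inr (Sum.inr k), Sum.inr (Sum.inl l) => Z k l
    | Sum.inr (Sum.inr k), Sum.inr (Sum.inr l) => Y k l

/-- Feasibility of `X̄ = [[1, xᵀ, yᵀ], [x, X, Zᵀ], [y, Z, Y]]` for the SDP relaxation. -/
def SDPFeasible (n ℵ : ℕ) (μ u : Fin n → ℝ) (ρ : ℝ)
    (x y : Fin n → ℝ) (X Y Z : Matrix (Fin n) (Fin n) ℝ) : Prop :=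
  (arrowMat n x y X Y Z).PosSemidef ∧
  μ ⬝ᵥ x ≥ ρ ∧ (∑ i, x i ≤ 1) ∧ (∑ i, y i ≥ (n : ℝ) - (ℵ : ℝ)) ∧
  (∀ i, Z i i = 0) ∧ (∀ i, Y i i = y i) ∧ (∀ i, 0 ≤ x i ∧ x i ≤ u i)

/-- Feasibility of `(x, y)` for the MIQP. -/
def MIQPFeasible (n ℵ : ℕ) (μ u : Fin n → ℝ) (ρ : ℝ) (x y : Fin n → ℝ) : Prop :=
  μ ⬝ᵥ x ≥ ρ ∧ (∑ i, x i ≤ 1) ∧ (∑ i, y i ≥ (n : ℝ) - (ℵ : ℝ)) ∧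
  (∀ i, x i * y i = 0) ∧ (∀ i, y i = 0 ∨ y i = 1) ∧ (∀ i, 0 ≤ x i ∧ x i ≤ u i)

theorem Matrix.apply_mul_apply_eq_of_rank_le_one {m n K : Type*} [Fintype n] [Field K]
    {M : Matrix m n K} (hM : M.rank ≤ 1) (i k : m) (j l : n) :
    M i j * M k l = M i l * M k j := by
  classical
  obtain ⟨v, hv⟩ := finrank_le_one_iff.1 hM
  have hcol : ∀ j, ∃ c : K, M.col j = c • (v : m → K) := fun j => by
    obtain ⟨c, hc⟩ := hv ⟨M.col j, Pi.single j 1, M.mulVec_single_one j⟩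
    exact ⟨c, congrArg Subtype.val hc.symm⟩
  obtain ⟨a, ha⟩ := hcol j
  obtain ⟨b, hb⟩ := hcol l
  have hMj := congrFun ha
  have hMl := congrFun hb
  simp only [col_apply, Pi.smul_apply, smul_eq_mul] at hMj hMl
  rw [hMj, hMj, hMl, hMl]
  ring

theorem Matrix.trace_transpose_vecMulVec_mul {n R : Type*} [Fintype n] [CommSemiring R]
    (a b : n → R) (Q : Matrix n n R) :
    trace ((vecMulVec a b)ᵀ * Q) = a ⬝ᵥ Q *ᵥ b := by
  rw [transpose_vecMulVec, vecMulVec_mul, trace_vecMulVec, dotProduct_comm, dotProduct_mulVec]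

theorem arrowMat_vecMulVec (n : ℕ) (x y : Fin n → ℝ) :
    arrowMat n x y (vecMulVec x x) (vecMulVec y y) (vecMulVec y x) =
      vecMulVec (Sum.elim 1 (Sum.elim x y)) (Sum.elim 1 (Sum.elim x y)) := by
  ext (_ | k | k) (_ | l | l) <;> simp [arrowMat, vecMulVec_apply, mul_comm]

theorem eq_vecMulVec_of_rank_arrowMat_le_one {n : ℕ} {x y : Fin n → ℝ}
    {X Y Z : Matrix (Fin n) (Fin n) ℝ} (h : (arrowMat n x y X Y Z).rank ≤ 1) :
    X = vecMulVec x x ∧ Y = vecMulVec y y ∧ Z = vecMulVec y x := by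
  have hfac := fun i j => apply_mul_apply_eq_of_rank_le_one h i (Sum.inl ()) j (Sum.inl ())
  refine ⟨?_, ?_, ?_⟩ <;> ext k l
  · simpa [arrowMat, vecMulVec_apply] using hfac (Sum.inr (Sum.inl k)) (Sum.inr (Sum.inl l))
  · simpa [arrowMat, vecMulVec_apply] using hfac (Sum.inr (Sum.inr k)) (Sum.inr (Sum.inr l))
  · simpa [arrowMat, vecMulVec_apply] using hfac (Sum.inr (Sum.inr k)) (Sum.inr (Sum.inl l))

theorem sdpFeasible_vecMulVec_iff {n ℵ : ℕ} {μ u : Fin n → ℝ} {ρ : ℝ} {x y : Fin n → ℝ} :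
    SDPFeasible n ℵ μ u ρ x y (vecMulVec x x) (vecMulVec y y) (vecMulVec y x) ↔
      MIQPFeasible n ℵ μ u ρ x y := by
  have hpsd : (arrowMat n x y (vecMulVec x x) (vecMulVec y y) (vecMulVec y x)).PosSemidef := by
    simpa [arrowMat_vecMulVec] using posSemidef_vecMulVec_self_star (Sum.elim 1 (Sum.elim x y))
  simp only [SDPFeasible, MIQPFeasible, vecMulVec_apply, hpsd, true_and, mul_comm (y _) (x _),
    ← isIdempotentElem_iff, IsIdempotentElem.iff_eq_zero_or_one]

theorem rank_one_sdp_optimal_solves_miqp_general (n : ℕ)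
    (Q : Matrix (Fin n) (Fin n) ℝ)
    (μ : Fin n → ℝ) (ρ : ℝ) (u : Fin n → ℝ) (ℵ : ℕ)
    (xs ys : Fin n → ℝ) (Xs Ys Zs : Matrix (Fin n) (Fin n) ℝ)
    (hfeas : SDPFeasible n ℵ μ u ρ xs ys Xs Ys Zs)
    (hopt : ∀ (x y : Fin n → ℝ) (X Y Z : Matrix (Fin n) (Fin n) ℝ),
      SDPFeasible n ℵ μ u ρ x y X Y Z →
        Matrix.trace (Xsᵀ * Q) ≤ Matrix.trace (Xᵀ * Q))
    (hrank : (arrowMat n xs ys Xs Ys Zs).rank = 1) :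
    MIQPFeasible n ℵ μ u ρ xs ys ∧
    ∀ x y : Fin n → ℝ, MIQPFeasible n ℵ μ u ρ x y →
      xs ⬝ᵥ Q.mulVec xs ≤ x ⬝ᵥ Q.mulVec x := by
  obtain ⟨rfl, rfl, rfl⟩ := eq_vecMulVec_of_rank_arrowMat_le_one hrank.le
  refine ⟨sdpFeasible_vecMulVec_iff.1 hfeas, fun x y hxy => ?_⟩
  have hle := hopt x y _ _ _ (sdpFeasible_vecMulVec_iff.2 hxy)
  rwa [trace_transpose_vecMulVec_mul, trace_transpose_vecMulVec_mul] at hle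

theorem rank_one_sdp_optimal_solves_miqp (n : ℕ) (hn : 0 < n)
    (Q : Matrix (Fin n) (Fin n) ℝ) (hQ : Q.IsSymm)
    (μ : Fin n → ℝ) (ρ : ℝ) (u : Fin n → ℝ) (ℵ : ℕ)
    (xs ys : Fin n → ℝ) (Xs Ys Zs : Matrix (Fin n) (Fin n) ℝ)
    (hfeas : SDPFeasible n ℵ μ u ρ xs ys Xs Ys Zs)
    (hopt : ∀ (x y : Fin n → ℝ) (X Y Z : Matrix (Fin n) (Fin n) ℝ),
      SDPFeasible n ℵ μ u ρ x y X Y Z →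
        Matrix.trace (Xsᵀ * Q) ≤ Matrix.trace (Xᵀ * Q))
    (hrank : (arrowMat n xs ys Xs Ys Zs).rank = 1) :
    MIQPFeasible n ℵ μ u ρ xs ys ∧
    ∀ x y : Fin n → ℝ, MIQPFeasible n ℵ μ u ρ x y →
      xs ⬝ᵥ Q.mulVec xs ≤ x ⬝ᵥ Q.mulVec x :=
  rank_one_sdp_optimal_solves_miqp_general n Q μ ρ u ℵ xs ys Xs Ys Zs hfeas hopt hrank
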